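/- arXiv:1311.3212 — 5 statements merged into one kernel-verified Lean document; each statement's English description precedes it below -/
import Mathlib

section
/- Let Λ, μ: [0,∞) → ℝ be continuous, bounded, nonnegative, and suppose there exist constants μ₁, μ₂ > 0 and T ≥ 0 such that ∫_{t₀}^t μ(s) ds ≥ μ₁(t − t₀) − μ₂ for all t ≥ t₀ ≥ T. If N solves N' = Λ(t) − μ(t) N with N(t₀) = N₀ ≥ 0 and t₀ ≥ T, then limsup_{t→∞} N(t) ≤ Λ_S e^{μ₂}/μ₁, where Λ_S = sup_{t≥0} Λ(t). -/
/-!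
By variation of constants, `N t = e^{-∫_{t₀}^t μ} N₀ + ∫_{t₀}^t e^{-∫_s^t μ} Λ s ds`. The
hypothesis on `∫ μ` bounds every kernel `e^{-∫_s^t μ}` by `e^{μ₂} e^{-μ₁ (t - s)}`, so the first
term decays to `0` and the second is at most `Λ_S e^{μ₂} ∫_{-∞}^t e^{-μ₁ (t - s)} ds = Λ_S e^{μ₂} / μ₁`.
The same formula shows `N ≥ 0` on `[t₀, ∞)`, which keeps the `limsup` from being a junk value.
-/

open Filter intervalIntegral

open Set Real Topology

section VariationOfConstants

variable {a b N : ℝ → ℝ} {t₀ t : ℝ}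

lemma hasDerivAt_integral_of_continuousOn_Ici (ha : ContinuousOn a (Ici t₀)) {s : ℝ}
    (hs : t₀ < s) : HasDerivAt (fun u ↦ ∫ r in t₀..u, a r) (a s) s :=
  integral_hasDerivAt_right ((ha.mono Icc_subset_Ici_self).intervalIntegrable_of_Icc hs.le)
    ((ha.mono Ioi_subset_Ici_self).stronglyMeasurableAtFilter isOpen_Ioi s hs)
    (ha.continuousAt (Ici_mem_nhds hs))

theorem variation_of_constants (ha : ContinuousOn a (Ici t₀)) (hb : ContinuousOn b (Ici t₀))
    (hN : ∀ s ≥ t₀, HasDerivAt N (b s - a s * N s) s) (ht : t₀ ≤ t) :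
    N t = exp (-∫ s in t₀..t, a s) * N t₀ + ∫ s in t₀..t, exp (-∫ r in s..t, a r) * b s := by
  set I : ℝ → ℝ := fun u ↦ ∫ r in t₀..u, a r
  have hI : ContinuousOn I (Icc t₀ t) := by
    have := continuousOn_primitive_interval (μ := MeasureTheory.volume) (a := t₀) (b := t)
      ((ha.mono (uIcc_of_le ht ▸ Icc_subset_Ici_self)).integrableOn_compact isCompact_uIcc)
    rwa [uIcc_of_le ht] at this
  have hNc : ContinuousOn N (Icc t₀ t) := fun s hs ↦ (hN s hs.1).continuousAt.continuousWithinAt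
  -- `exp (∫ a) * N` is a primitive of `exp (∫ a) * b`
  have hFTC : ∫ s in t₀..t, exp (I s) * b s = exp (I t) * N t - exp (I t₀) * N t₀ := by
    refine integral_eq_sub_of_hasDerivAt_of_le ht (hI.rexp.mul hNc) (fun s hs ↦ ?_)
      ((hI.rexp.mul (hb.mono Icc_subset_Ici_self)).intervalIntegrable_of_Icc ht)
    exact ((hasDerivAt_integral_of_continuousOn_Ici ha hs.1).exp.mul (hN s hs.1.le)).congr_deriv
      (by ring)
  have hint : ∀ u ∈ Icc t₀ t, IntervalIntegrable a MeasureTheory.volume t₀ u := fun u hu ↦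
    (ha.mono Icc_subset_Ici_self).intervalIntegrable_of_Icc hu.1
  have hsplit : ∀ s ∈ Icc t₀ t, ∫ r in s..t, a r = I t - I s := fun s hs ↦
    (integral_interval_sub_left (hint t (right_mem_Icc.2 ht)) (hint s hs)).symm
  have hI₀ : I t₀ = 0 := integral_same
  calc N t = exp (-I t) * (exp (I t) * N t) := by rw [← mul_assoc, ← exp_add]; simp
    _ = exp (-I t) * N t₀ + ∫ s in t₀..t, exp (-I t) * (exp (I s) * b s) := by
      rw [intervalIntegral.integral_const_mul, hFTC, hI₀, exp_zero]; ring
    _ = _ := by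
      congr 1
      refine integral_congr fun s hs ↦ ?_
      rw [uIcc_of_le ht] at hs
      simp only [hsplit s hs, ← mul_assoc, ← exp_add]
      ring_nf

theorem variation_of_constants_nonneg {N₀ : ℝ} (ht : t₀ ≤ t) (hN₀ : 0 ≤ N₀)
    (hb : ∀ s ∈ Icc t₀ t, 0 ≤ b s) :
    0 ≤ exp (-∫ s in t₀..t, a s) * N₀ + ∫ s in t₀..t, exp (-∫ r in s..t, a r) * b s :=
  add_nonneg (by positivity) (integral_nonneg ht fun s hs ↦ mul_nonneg (exp_nonneg _) (hb s hs))

end VariationOfConstants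

lemma intervalIntegral.integral_mono_on_of_nonneg {f g : ℝ → ℝ} {a b : ℝ} (hab : a ≤ b)
    (hg : IntervalIntegrable g MeasureTheory.volume a b) (hf : ∀ x ∈ Icc a b, 0 ≤ f x)
    (hfg : ∀ x ∈ Icc a b, f x ≤ g x) : ∫ x in a..b, f x ≤ ∫ x in a..b, g x := by
  rw [integral_of_le hab, integral_of_le hab]
  refine MeasureTheory.integral_mono_of_nonneg ?_ hg.1 ?_ <;>
    refine MeasureTheory.ae_restrict_of_forall_mem measurableSet_Ioc fun x hx ↦ ?_
  exacts [hf x (Ioc_subset_Icc_self hx), hfg x (Ioc_subset_Icc_self hx)]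

lemma integral_exp_neg_mul_sub_le {c : ℝ} (hc : 0 < c) (t₀ t : ℝ) :
    ∫ s in t₀..t, exp (-(c * (t - s))) ≤ c⁻¹ := by
  have hderiv : ∀ s ∈ uIcc t₀ t,
      HasDerivAt (fun s ↦ exp (-(c * (t - s))) / c) (exp (-(c * (t - s)))) s := fun s _ ↦
    ((((hasDerivAt_id s).const_sub t).const_mul c).neg.exp.div_const c).congr_deriv
      (by simp only [id, Pi.neg_apply]; field_simp)
  rw [integral_eq_sub_of_hasDerivAt hderiv (Continuous.intervalIntegrable (by fun_prop) _ _)]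
  simp only [sub_self, mul_zero, neg_zero, exp_zero, one_div]
  have : 0 ≤ exp (-(c * (t - t₀))) / c := by positivity
  linarith

theorem variation_of_constants_le {a b : ℝ → ℝ} {t₀ t N₀ B μ₁ μ₂ : ℝ} (hμ₁ : 0 < μ₁)
    (ht : t₀ ≤ t) (hN₀ : 0 ≤ N₀) (hb : ∀ s ∈ Icc t₀ t, 0 ≤ b s ∧ b s ≤ B)
    (ha : ∀ s ∈ Icc t₀ t, μ₁ * (t - s) - μ₂ ≤ ∫ r in s..t, a r) :
    exp (-∫ s in t₀..t, a s) * N₀ + ∫ s in t₀..t, exp (-∫ r in s..t, a r) * b s ≤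
      N₀ * exp (μ₂ - μ₁ * (t - t₀)) + B * exp μ₂ / μ₁ := by
  have hdecay : ∀ s ∈ Icc t₀ t, exp (-∫ r in s..t, a r) ≤ exp μ₂ * exp (-(μ₁ * (t - s))) :=
    fun s hs ↦ by rw [← exp_add, exp_le_exp]; linarith [ha s hs]
  have hB : 0 ≤ B := (hb t (right_mem_Icc.2 ht)).elim le_trans
  gcongr ?_ + ?_
  · rw [mul_comm]
    gcongr
    linarith [ha t₀ (left_mem_Icc.2 ht)]
  · calc ∫ s in t₀..t, exp (-∫ r in s..t, a r) * b s
        ≤ ∫ s in t₀..t, B * exp μ₂ * exp (-(μ₁ * (t - s))) := by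
          refine integral_mono_on_of_nonneg ht (Continuous.intervalIntegrable (by fun_prop) _ _)
            (fun s hs ↦ mul_nonneg (exp_nonneg _) (hb s hs).1) fun s hs ↦ ?_
          calc exp (-∫ r in s..t, a r) * b s ≤ exp μ₂ * exp (-(μ₁ * (t - s))) * B :=
                mul_le_mul (hdecay s hs) (hb s hs).2 (hb s hs).1 (by positivity)
            _ = _ := by ring
      _ ≤ B * exp μ₂ * μ₁⁻¹ := by
          rw [intervalIntegral.integral_const_mul]
          gcongr
          exact integral_exp_neg_mul_sub_le hμ₁ t₀ t
      _ = B * exp μ₂ / μ₁ := div_eq_mul_inv _ _ |>.symm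

lemma tendsto_mul_exp_sub_mul_sub_atTop {c : ℝ} (hc : 0 < c) (K b t₀ : ℝ) :
    Tendsto (fun t ↦ K * exp (b - c * (t - t₀))) atTop (𝓝 0) := by
  have h : Tendsto (fun t ↦ c * (t - t₀) - b) atTop atTop :=
    tendsto_atTop_add_const_right _ _
      ((tendsto_atTop_add_const_right _ _ tendsto_id).const_mul_atTop hc)
  simpa using (tendsto_exp_neg_atTop_nhds_zero.comp h).const_mul K

lemma limsup_le_of_eventually_le_of_tendsto {α β : Type*} [ConditionallyCompleteLinearOrder β]
    [TopologicalSpace β] [OrderTopology β] {l : Filter α} [l.NeBot] {f g : α → β} {c : β}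
    (hf : IsBoundedUnder (· ≥ ·) l f) (hfg : f ≤ᶠ[l] g) (hg : Tendsto g l (𝓝 c)) :
    limsup f l ≤ c :=
  (limsup_le_limsup hfg hf.isCoboundedUnder_le hg.isBoundedUnder_le).trans_eq hg.limsup_eq

theorem stmt1_general
    (Λ μ : ℝ → ℝ)
    (hΛcont : ContinuousOn Λ (Set.Ici 0)) (hμcont : ContinuousOn μ (Set.Ici 0))
    (hΛbdd : BddAbove (Λ '' Set.Ici 0))
    (hΛnonneg : ∀ t ≥ (0:ℝ), 0 ≤ Λ t)
    (μ₁ μ₂ T : ℝ) (hμ₁ : 0 < μ₁) (hT : 0 ≤ T)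
    (hint : ∀ t₀ t : ℝ, T ≤ t₀ → t₀ ≤ t → μ₁ * (t - t₀) - μ₂ ≤ ∫ s in t₀..t, μ s)
    (N : ℝ → ℝ) (t₀ N₀ : ℝ) (ht₀ : T ≤ t₀) (hN₀ : 0 ≤ N₀) (hNinit : N t₀ = N₀)
    (hode : ∀ t ≥ t₀, HasDerivAt N (Λ t - μ t * N t) t)
    (ΛS : ℝ) (hΛS : ΛS = sSup (Λ '' Set.Ici 0)) :
    Filter.limsup N Filter.atTop ≤ ΛS * Real.exp μ₂ / μ₁ := by
  have hsub : Ici t₀ ⊆ Ici 0 := Ici_subset_Ici.2 (hT.trans ht₀)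
  have hΛ : ∀ t ≥ t₀, ∀ s ∈ Icc t₀ t, 0 ≤ Λ s ∧ Λ s ≤ ΛS := fun _ _ s hs ↦
    ⟨hΛnonneg s (hsub hs.1), hΛS ▸ le_csSup hΛbdd ⟨s, hsub hs.1, rfl⟩⟩
  have hsol : ∀ t ≥ t₀, N t = exp (-∫ s in t₀..t, μ s) * N₀ +
      ∫ s in t₀..t, exp (-∫ r in s..t, μ r) * Λ s := fun t ht ↦
    hNinit ▸ variation_of_constants (hμcont.mono hsub) (hΛcont.mono hsub) hode ht
  refine limsup_le_of_eventually_le_of_tendsto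
    (g := fun t ↦ N₀ * exp (μ₂ - μ₁ * (t - t₀)) + ΛS * exp μ₂ / μ₁) ?_ ?_ ?_
  · refine isBoundedUnder_of_eventually_ge (a := 0) ?_
    filter_upwards [eventually_ge_atTop t₀] with t ht
    rw [hsol t ht]
    exact variation_of_constants_nonneg ht hN₀ fun s hs ↦ (hΛ t ht s hs).1
  · filter_upwards [eventually_ge_atTop t₀] with t ht
    rw [hsol t ht]
    exact variation_of_constants_le hμ₁ ht hN₀ (hΛ t ht) fun s hs ↦ hint s t (ht₀.trans hs.1) hs.2
  · simpa using (tendsto_mul_exp_sub_mul_sub_atTop hμ₁ N₀ μ₂ t₀).add_const (ΛS * exp μ₂ / μ₁)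

theorem stmt1
    (Λ μ : ℝ → ℝ)
    (hΛcont : ContinuousOn Λ (Set.Ici 0)) (hμcont : ContinuousOn μ (Set.Ici 0))
    (hΛbdd : BddAbove (Λ '' Set.Ici 0)) (hμbdd : BddAbove (μ '' Set.Ici 0))
    (hΛnonneg : ∀ t ≥ (0:ℝ), 0 ≤ Λ t) (hμnonneg : ∀ t ≥ (0:ℝ), 0 ≤ μ t)
    (μ₁ μ₂ T : ℝ) (hμ₁ : 0 < μ₁) (hμ₂ : 0 < μ₂) (hT : 0 ≤ T)
    (hint : ∀ t₀ t : ℝ, T ≤ t₀ → t₀ ≤ t → μ₁ * (t - t₀) - μ₂ ≤ ∫ s in t₀..t, μ s)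
    (N : ℝ → ℝ) (t₀ N₀ : ℝ) (ht₀ : T ≤ t₀) (hN₀ : 0 ≤ N₀) (hNinit : N t₀ = N₀)
    (hode : ∀ t ≥ t₀, HasDerivAt N (Λ t - μ t * N t) t)
    (ΛS : ℝ) (hΛS : ΛS = sSup (Λ '' Set.Ici 0)) :
    Filter.limsup N Filter.atTop ≤ ΛS * Real.exp μ₂ / μ₁ :=
  stmt1_general Λ μ hΛcont hμcont hΛbdd hΛnonneg μ₁ μ₂ T hμ₁ hT hint N t₀ N₀ ht₀ hN₀ hNinit hode ΛS
    hΛS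
end

section
/- Let Λ, μ: [0,∞) → ℝ be continuous, bounded, nonnegative, and suppose there exist μ₁, μ₂ > 0 and T ≥ 0 such that ∫_{t₀}^t μ(s) ds ≥ μ₁(t−t₀) − μ₂ for all t ≥ t₀ ≥ T. Let f: [0,∞) → ℝ be continuous and bounded, let z solve z' = Λ(t) − μ(t) z and z̃ solve z̃' = Λ(t) − μ(t) z̃ + f(t), with z̃(t₀) = z(t₀) and t₀ ≥ T. Then sup_{t ≥ t₀} |z̃(t) − z(t)| ≤ (e^{μ₂}/μ₁) sup_{t ≥ t₀} |f(t)|. -/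
/-!
The difference `w = z̃ - z` solves `w' = f - μ w` with `w t₀ = 0`, so by variation of constants
`w t = ∫_{t₀}^t exp (-∫_u^t μ) f u du`. The lower bound on `∫ μ` bounds the kernel by
`exp μ₂ * exp (-μ₁ (t - u))`, whose integral over `[t₀, t]` is at most `exp μ₂ / μ₁`.
-/

open intervalIntegral Real Set Topology

theorem hasDerivAt_exp_integral_mul {μ f g : ℝ → ℝ} {a t : ℝ}
    (hμ : IntervalIntegrable μ MeasureTheory.volume a t)
    (hμm : StronglyMeasurableAtFilter μ (𝓝 t)) (hμt : ContinuousAt μ t)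
    (hg : HasDerivAt g (f t - μ t * g t) t) :
    HasDerivAt (fun u ↦ exp (∫ s in a..u, μ s) * g u) (exp (∫ s in a..t, μ s) * f t) t :=
  ((integral_hasDerivAt_right hμ hμm hμt).exp.mul hg).congr_deriv (by ring)

theorem eq_exp_neg_integral_mul_add_integral {μ f g : ℝ → ℝ} {a b : ℝ} (hab : a ≤ b)
    (hμ : ContinuousOn μ (Icc a b)) (hf : ContinuousOn f (Icc a b))
    (hg : ContinuousOn g (Icc a b)) (hg' : ∀ t ∈ Ioo a b, HasDerivAt g (f t - μ t * g t) t) :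
    g b = exp (-∫ s in a..b, μ s) * g a + ∫ u in a..b, exp (-∫ s in u..b, μ s) * f u := by
  set I : ℝ → ℝ := fun t ↦ ∫ s in a..t, μ s
  have hI : ContinuousOn I (Icc a b) := by
    rw [← uIcc_of_le hab] at hμ ⊢
    exact continuousOn_primitive_interval hμ.integrableOn_uIcc
  have hμint : ∀ u ∈ Icc a b, IntervalIntegrable μ MeasureTheory.volume a u := fun u hu ↦
    (hμ.mono (Icc_subset_Icc_right hu.2)).intervalIntegrable_of_Icc hu.1
  have hFTC : ∫ u in a..b, exp (I u) * f u = exp (I b) * g b - exp (I a) * g a := by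
    refine integral_eq_sub_of_hasDerivAt_of_le hab ((continuous_exp.comp_continuousOn hI).mul hg)
      (fun t ht ↦ hasDerivAt_exp_integral_mul (hμint t (Ioo_subset_Icc_self ht))
        (hμ.mono Ioo_subset_Icc_self |>.stronglyMeasurableAtFilter isOpen_Ioo t ht)
        (hμ.continuousAt (Icc_mem_nhds ht.1 ht.2)) (hg' t ht)) ?_
    exact ((continuous_exp.comp_continuousOn hI).mul hf).intervalIntegrable_of_Icc hab
  have hsub : ∀ u ∈ uIcc a b, ∫ s in u..b, μ s = I b - I u := fun u hu ↦
    (integral_interval_sub_left (hμint b (right_mem_Icc.2 hab))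
      (hμint u (by rwa [uIcc_of_le hab] at hu))).symm
  have hIa : I a = 0 := integral_same
  calc g b
      = exp (-I b) * (exp (I b) * g b) := by
        rw [← mul_assoc, ← exp_add, neg_add_cancel, exp_zero, one_mul]
    _ = exp (-I b) * g a + ∫ u in a..b, exp (-I b) * (exp (I u) * f u) := by
        rw [integral_const_mul, hFTC, hIa, exp_zero]; ring
    _ = _ := by
        congr 1
        refine integral_congr fun u hu ↦ ?_
        simp only [hsub u hu, ← mul_assoc, ← exp_add]
        ring_nf

theorem integral_exp_mul_sub_le {μ₁ : ℝ} (hμ₁ : 0 < μ₁) (a t : ℝ) :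
    ∫ u in a..t, exp (μ₁ * (u - t)) ≤ 1 / μ₁ := by
  have hderiv : ∀ u ∈ uIcc a t,
      HasDerivAt (fun u ↦ exp (μ₁ * (u - t)) / μ₁) (exp (μ₁ * (u - t))) u := fun u _ ↦
    ((((hasDerivAt_id' u).sub_const t).const_mul μ₁).exp.div_const μ₁).congr_deriv
      (by field_simp)
  rw [integral_eq_sub_of_hasDerivAt hderiv (Continuous.intervalIntegrable (by fun_prop) _ _),
    sub_self, mul_zero, exp_zero, sub_le_self_iff]
  positivity

theorem abs_integral_exp_neg_integral_mul_le {μ f : ℝ → ℝ} {μ₁ μ₂ M a t : ℝ} (hμ₁ : 0 < μ₁)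
    (hat : a ≤ t) (hμ : ∀ u ∈ Icc a t, μ₁ * (t - u) - μ₂ ≤ ∫ s in u..t, μ s)
    (hf : ∀ u ∈ Icc a t, |f u| ≤ M) :
    |∫ u in a..t, exp (-∫ s in u..t, μ s) * f u| ≤ exp μ₂ / μ₁ * M := by
  have hM : 0 ≤ M := (abs_nonneg _).trans (hf a (left_mem_Icc.2 hat))
  have hpointwise : ∀ u ∈ Ioc a t,
      ‖exp (-∫ s in u..t, μ s) * f u‖ ≤ exp μ₂ * M * exp (μ₁ * (u - t)) := by
    intro u hu
    have hu' : u ∈ Icc a t := Ioc_subset_Icc_self hu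
    rw [Real.norm_eq_abs, abs_mul, abs_of_pos (exp_pos _), mul_right_comm, ← exp_add]
    gcongr
    · linarith [hμ u hu']
    · exact hf u hu'
  calc |∫ u in a..t, exp (-∫ s in u..t, μ s) * f u|
      ≤ ∫ u in a..t, exp μ₂ * M * exp (μ₁ * (u - t)) :=
        norm_integral_le_of_norm_le hat (.of_forall hpointwise)
          (Continuous.intervalIntegrable (by fun_prop) _ _)
    _ = exp μ₂ * M * ∫ u in a..t, exp (μ₁ * (u - t)) := integral_const_mul _ _
    _ ≤ exp μ₂ * M * (1 / μ₁) := by gcongr; exact integral_exp_mul_sub_le hμ₁ a t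
    _ = exp μ₂ / μ₁ * M := by ring

theorem stmt4_general
    (Λ μ f : ℝ → ℝ)
    (hμcont : ContinuousOn μ (Set.Ici 0))
    (hfcont : ContinuousOn f (Set.Ici 0))
    (hfbdd : ∃ C : ℝ, ∀ t ≥ (0:ℝ), |f t| ≤ C)
    (μ₁ μ₂ T : ℝ) (hμ₁ : 0 < μ₁) (hT : 0 ≤ T)
    (hint : ∀ t₀ t : ℝ, T ≤ t₀ → t₀ ≤ t → μ₁ * (t - t₀) - μ₂ ≤ ∫ s in t₀..t, μ s)
    (t₀ : ℝ) (ht₀ : T ≤ t₀)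
    (z ztil : ℝ → ℝ)
    (hodez : ∀ t ≥ t₀, HasDerivAt z (Λ t - μ t * z t) t)
    (hodeztil : ∀ t ≥ t₀, HasDerivAt ztil (Λ t - μ t * ztil t + f t) t)
    (hinit : ztil t₀ = z t₀) :
    ⨆ t : {t : ℝ // t₀ ≤ t}, |ztil t - z t| ≤
      (Real.exp μ₂ / μ₁) * ⨆ t : {t : ℝ // t₀ ≤ t}, |f t| := by
  have : Nonempty {t : ℝ // t₀ ≤ t} := ⟨⟨t₀, le_rfl⟩⟩
  have hIcc : ∀ t, Icc t₀ t ⊆ Ici 0 := fun t u hu ↦ (hT.trans ht₀).trans hu.1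
  obtain ⟨C, hC⟩ := hfbdd
  have hbdd : BddAbove (range fun t : {t : ℝ // t₀ ≤ t} ↦ |f t|) :=
    ⟨C, by rintro _ ⟨⟨v, hv⟩, rfl⟩; exact hC v (hIcc v ⟨hv, le_rfl⟩)⟩
  have hf_le_iSup : ∀ u, t₀ ≤ u → |f u| ≤ ⨆ t : {t : ℝ // t₀ ≤ t}, |f t| := fun u hu ↦
    le_ciSup hbdd ⟨u, hu⟩
  refine ciSup_le fun ⟨t, ht⟩ ↦ ?_
  have hdiff : ztil t - z t = ∫ u in t₀..t, exp (-∫ s in u..t, μ s) * f u := by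
    simpa [hinit] using eq_exp_neg_integral_mul_add_integral (g := fun t ↦ ztil t - z t) ht
      (hμcont.mono (hIcc t)) (hfcont.mono (hIcc t))
      (fun u hu ↦ ((hodeztil u hu.1).sub (hodez u hu.1)).continuousAt.continuousWithinAt)
      (fun u hu ↦ ((hodeztil u hu.1.le).sub (hodez u hu.1.le)).congr_deriv (by ring))
  rw [hdiff]
  exact abs_integral_exp_neg_integral_mul_le hμ₁ ht (fun u hu ↦ hint u t (ht₀.trans hu.1) hu.2)
    (fun u hu ↦ hf_le_iSup u hu.1)

theorem stmt4
    (Λ μ f : ℝ → ℝ)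
    (hΛcont : ContinuousOn Λ (Set.Ici 0)) (hμcont : ContinuousOn μ (Set.Ici 0))
    (hfcont : ContinuousOn f (Set.Ici 0))
    (hΛbdd : BddAbove (Λ '' Set.Ici 0)) (hμbdd : BddAbove (μ '' Set.Ici 0))
    (hfbdd : ∃ C : ℝ, ∀ t ≥ (0:ℝ), |f t| ≤ C)
    (hΛnonneg : ∀ t ≥ (0:ℝ), 0 ≤ Λ t) (hμnonneg : ∀ t ≥ (0:ℝ), 0 ≤ μ t)
    (μ₁ μ₂ T : ℝ) (hμ₁ : 0 < μ₁) (hμ₂ : 0 < μ₂) (hT : 0 ≤ T)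
    (hint : ∀ t₀ t : ℝ, T ≤ t₀ → t₀ ≤ t → μ₁ * (t - t₀) - μ₂ ≤ ∫ s in t₀..t, μ s)
    (t₀ : ℝ) (ht₀ : T ≤ t₀)
    (z ztil : ℝ → ℝ)
    (hodez : ∀ t ≥ t₀, HasDerivAt z (Λ t - μ t * z t) t)
    (hodeztil : ∀ t ≥ t₀, HasDerivAt ztil (Λ t - μ t * ztil t + f t) t)
    (hinit : ztil t₀ = z t₀) :
    ⨆ t : {t : ℝ // t₀ ≤ t}, |ztil t - z t| ≤
      (Real.exp μ₂ / μ₁) * ⨆ t : {t : ℝ // t₀ ≤ t}, |f t| :=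
  stmt4_general Λ μ f hμcont hfcont hfbdd μ₁ μ₂ T hμ₁ hT hint t₀ ht₀ z ztil hodez hodeztil hinit
end

section
/- Let Λ, μ: [0,∞) → ℝ be continuous, bounded, nonnegative, with sup μ = μ_S < ∞, and suppose there exists ω_Λ > 0 with liminf_{t→∞} (1/ω_Λ) ∫_t^{t+ω_Λ} Λ(s) ds > 0 and there exist μ₁, μ₂ > 0, T ≥ 0 with ∫_{t₀}^t μ(s) ds ≥ μ₁(t−t₀) − μ₂ for t ≥ t₀ ≥ T. Then there exist constants m₁, m₂ > 0 such that every solution z of z' = Λ(t) − μ(t) z with z(0) > 0 satisfies m₁ ≤ liminf_{t→∞} z(t) ≤ limsup_{t→∞} z(t) ≤ m₂. -/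
open Filter intervalIntegral Set Real Topology

/-! By variation of constants,
`z t = z a * exp (-∫ a..t, μ) + ∫ s in a..t, Λ s * exp (-∫ s..t, μ)`.
On the last window `[t - ω, t]` the kernel `exp (-∫ s..t, μ)` is at least `exp (-μS * ω)` and
the window carries `Λ`-mass at least `c * ω`, which gives the lower bound. From time `T` on the
kernel is at most `exp (μ₂ - μ₁ * (t - s))`, so the integral term is at most
`sup Λ * exp μ₂ / μ₁`, while the term coming from `z T` decays exponentially. -/

theorem Real.eventually_lt_of_lt_liminf {α : Type*} {f : Filter α} {u : α → ℝ} {b : ℝ}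
    (hb : 0 ≤ b) (h : b < liminf u f) : ∀ᶠ x in f, b < u x := by
  rw [liminf_eq] at h
  -- `sSup ∅ = 0` in `ℝ`, so a liminf above `0` needs some eventual lower bound
  have hne : {a | ∀ᶠ x in f, a ≤ u x}.Nonempty := by
    by_contra hempty
    rw [not_nonempty_iff_eq_empty.1 hempty, Real.sSup_empty] at h
    exact h.not_ge hb
  obtain ⟨a, ha, hba⟩ := exists_lt_of_lt_csSup hne h
  exact ha.mono fun x hx => hba.trans_le hx

theorem le_liminf_and_limsup_le_of_eventually {α β : Type*} [ConditionallyCompleteLinearOrder β]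
    {f : Filter α} [f.NeBot] {u : α → β} {m₁ m₂ : β}
    (h₁ : ∀ᶠ x in f, m₁ ≤ u x) (h₂ : ∀ᶠ x in f, u x ≤ m₂) :
    m₁ ≤ liminf u f ∧ liminf u f ≤ limsup u f ∧ limsup u f ≤ m₂ := by
  have hle : IsBoundedUnder (· ≤ ·) f u := ⟨m₂, h₂⟩
  have hge : IsBoundedUnder (· ≥ ·) f u := ⟨m₁, h₁⟩
  exact ⟨le_liminf_of_le hle.isCoboundedUnder_ge h₁, liminf_le_limsup hle hge,
    limsup_le_of_le hge.isCoboundedUnder_le h₂⟩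

theorem integral_exp_mul_sub_mul_le {a b c : ℝ} (hc : 0 < c) :
    ∫ s in a..b, exp (c * s - c * b) ≤ c⁻¹ := by
  rw [integral_comp_mul_sub (f := exp) hc.ne', integral_exp, sub_self, exp_zero, smul_eq_mul]
  exact mul_le_of_le_one_right (inv_nonneg.2 hc.le) (by linarith [exp_pos (c * a - c * b)])

section LinearODE

variable {Λ μ z : ℝ → ℝ} {a b : ℝ}

theorem intervalIntegrable_mul_exp_neg_integral (hab : a ≤ b) (hΛ : ContinuousOn Λ (Icc a b))
    (hμ : ContinuousOn μ (Icc a b)) :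
    IntervalIntegrable (fun s => Λ s * exp (-∫ r in s..b, μ r)) MeasureTheory.volume a b := by
  have hI : ContinuousOn (fun s => ∫ r in s..b, μ r) (Icc a b) := by
    rw [← uIcc_of_le hab] at hμ ⊢
    exact continuousOn_primitive_interval_left hμ.integrableOn_uIcc
  exact (hΛ.mul hI.neg.rexp).intervalIntegrable_of_Icc hab

theorem variation_of_constants_s5 (hab : a ≤ b) (hΛ : ContinuousOn Λ (Icc a b))
    (hμ : ContinuousOn μ (Icc a b)) (hz : ∀ t ∈ Icc a b, HasDerivAt z (Λ t - μ t * z t) t) :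
    z b = z a * exp (-∫ r in a..b, μ r) + ∫ s in a..b, Λ s * exp (-∫ r in s..b, μ r) := by
  set M : ℝ → ℝ := fun t => ∫ r in a..t, μ r
  have hμi : IntervalIntegrable μ MeasureTheory.volume a b := hμ.intervalIntegrable_of_Icc hab
  have hMcont : ContinuousOn M (Icc a b) := by
    simpa only [uIcc_of_le hab] using continuousOn_primitive_interval' hμi left_mem_uIcc
  have hMderiv : ∀ t ∈ Ioo a b, HasDerivAt M (μ t) t := fun t ht =>
    integral_hasDerivAt_right
      ((hμ.mono (Icc_subset_Icc_right ht.2.le)).intervalIntegrable_of_Icc ht.1.le)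
      ((hμ.mono Ioo_subset_Icc_self).stronglyMeasurableAtFilter isOpen_Ioo t ht)
      (hμ.continuousAt (Icc_mem_nhds ht.1 ht.2))
  have hFTC : ∫ s in a..b, Λ s * exp (M s) = z b * exp (M b) - z a * exp (M a) := by
    refine integral_eq_sub_of_hasDerivAt_of_le hab
      ((HasDerivAt.continuousOn hz).mul hMcont.rexp) (fun t ht => ?_)
      ((hΛ.mul hMcont.rexp).intervalIntegrable_of_Icc hab)
    exact ((hz t (Ioo_subset_Icc_self ht)).mul (hMderiv t ht).exp).congr_deriv (by ring)
  have hkernel : ∫ s in a..b, Λ s * exp (-∫ r in s..b, μ r)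
      = (∫ s in a..b, Λ s * exp (M s)) * exp (-M b) := by
    rw [← integral_mul_const]
    refine integral_congr fun s hs => ?_
    rw [uIcc_of_le hab] at hs
    rw [← integral_interval_sub_left hμi
      ((hμ.mono (Icc_subset_Icc_right hs.2)).intervalIntegrable_of_Icc hs.1),
      mul_assoc, ← exp_add, neg_sub, sub_eq_add_neg]
  rw [hkernel, hFTC]
  simp only [M, integral_same, exp_zero]
  rw [sub_mul, mul_assoc, ← exp_add, add_neg_cancel, exp_zero]
  ring

theorem nonneg_of_linear_ode (hab : a ≤ b) (hΛ : ContinuousOn Λ (Icc a b))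
    (hμ : ContinuousOn μ (Icc a b)) (hz : ∀ t ∈ Icc a b, HasDerivAt z (Λ t - μ t * z t) t)
    (hza : 0 ≤ z a) (hΛ0 : ∀ t ∈ Icc a b, 0 ≤ Λ t) : 0 ≤ z b := by
  rw [variation_of_constants_s5 hab hΛ hμ hz]
  exact add_nonneg (mul_nonneg hza (exp_pos _).le)
    (integral_nonneg hab fun s hs => mul_nonneg (hΛ0 s hs) (exp_pos _).le)

theorem exp_mul_integral_le_of_linear_ode {K : ℝ} (hab : a ≤ b)
    (hΛ : ContinuousOn Λ (Icc a b)) (hμ : ContinuousOn μ (Icc a b))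
    (hz : ∀ t ∈ Icc a b, HasDerivAt z (Λ t - μ t * z t) t) (hza : 0 ≤ z a)
    (hΛ0 : ∀ t ∈ Icc a b, 0 ≤ Λ t) (hK : ∀ t ∈ Icc a b, μ t ≤ K) (hK0 : 0 ≤ K) :
    exp (-(K * (b - a))) * ∫ s in a..b, Λ s ≤ z b := by
  have hkernel : ∀ s ∈ Icc a b, exp (-(K * (b - a))) ≤ exp (-∫ r in s..b, μ r) := by
    intro s hs
    have hsub : Icc s b ⊆ Icc a b := Icc_subset_Icc_left hs.1
    have hI : ∫ r in s..b, μ r ≤ K * (b - a) := calc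
      ∫ r in s..b, μ r ≤ ∫ _ in s..b, K :=
          integral_mono_on hs.2 ((hμ.mono hsub).intervalIntegrable_of_Icc hs.2)
            intervalIntegrable_const fun r hr => hK r (hsub hr)
      _ = K * (b - s) := by rw [integral_const, smul_eq_mul, mul_comm]
      _ ≤ K * (b - a) := by gcongr; exact hs.1
    exact exp_le_exp.2 (neg_le_neg hI)
  have hintegral : exp (-(K * (b - a))) * ∫ s in a..b, Λ s
      ≤ ∫ s in a..b, Λ s * exp (-∫ r in s..b, μ r) := by
    rw [← integral_const_mul]
    refine integral_mono_on hab ((hΛ.intervalIntegrable_of_Icc hab).const_mul _)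
      (intervalIntegrable_mul_exp_neg_integral hab hΛ hμ) fun s hs => ?_
    rw [mul_comm]
    exact mul_le_mul_of_nonneg_left (hkernel s hs) (hΛ0 s hs)
  rw [variation_of_constants_s5 hab hΛ hμ hz]
  linarith [mul_nonneg hza (exp_pos (-∫ r in a..b, μ r)).le]

theorem le_mul_exp_add_of_linear_ode {L μ₁ μ₂ : ℝ} (hab : a ≤ b)
    (hΛ : ContinuousOn Λ (Icc a b)) (hμ : ContinuousOn μ (Icc a b))
    (hz : ∀ t ∈ Icc a b, HasDerivAt z (Λ t - μ t * z t) t) (hza : 0 ≤ z a)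
    (hL : ∀ t ∈ Icc a b, Λ t ≤ L) (hL0 : 0 ≤ L) (hμ₁ : 0 < μ₁)
    (hint : ∀ s ∈ Icc a b, μ₁ * (b - s) - μ₂ ≤ ∫ r in s..b, μ r) :
    z b ≤ z a * exp (μ₂ - μ₁ * (b - a)) + L * exp μ₂ / μ₁ := by
  have hinitial : z a * exp (-∫ r in a..b, μ r) ≤ z a * exp (μ₂ - μ₁ * (b - a)) := by
    gcongr
    linarith [hint a (left_mem_Icc.2 hab)]
  have hintegral : ∫ s in a..b, Λ s * exp (-∫ r in s..b, μ r) ≤ L * exp μ₂ / μ₁ := calc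
    ∫ s in a..b, Λ s * exp (-∫ r in s..b, μ r)
        ≤ ∫ s in a..b, L * exp μ₂ * exp (μ₁ * s - μ₁ * b) := by
      refine integral_mono_on hab (intervalIntegrable_mul_exp_neg_integral hab hΛ hμ)
        (Continuous.intervalIntegrable (by fun_prop) _ _) fun s hs => ?_
      rw [mul_assoc, ← exp_add]
      gcongr
      · exact hL s hs
      · linarith [hint s hs]
    _ = L * exp μ₂ * ∫ s in a..b, exp (μ₁ * s - μ₁ * b) := integral_const_mul _ _
    _ ≤ L * exp μ₂ * μ₁⁻¹ := by gcongr; exact integral_exp_mul_sub_mul_le hμ₁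
    _ = L * exp μ₂ / μ₁ := by rw [div_eq_mul_inv]
  rw [variation_of_constants_s5 hab hΛ hμ hz]
  linarith

end LinearODE

section HalfLine

variable {Λ μ z : ℝ → ℝ}

theorem eventually_le_of_linear_ode {L μ₁ μ₂ T : ℝ} (hΛ : ContinuousOn Λ (Ici 0))
    (hμ : ContinuousOn μ (Ici 0)) (hz : ∀ t ≥ (0:ℝ), HasDerivAt z (Λ t - μ t * z t) t)
    (hz0 : ∀ t ≥ (0:ℝ), 0 ≤ z t) (hL : ∀ t ≥ (0:ℝ), Λ t ≤ L) (hL0 : 0 ≤ L) (hμ₁ : 0 < μ₁)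
    (hT : 0 ≤ T)
    (hint : ∀ t₀ t : ℝ, T ≤ t₀ → t₀ ≤ t → μ₁ * (t - t₀) - μ₂ ≤ ∫ s in t₀..t, μ s) :
    ∀ᶠ t in atTop, z t ≤ L * exp μ₂ / μ₁ + 1 := by
  have hdecay : Tendsto (fun t => z T * exp (μ₂ - μ₁ * (t - T))) atTop (𝓝 0) := by
    have hlin : Tendsto (fun t => μ₂ - μ₁ * (t - T)) atTop atBot := by
      simpa [sub_eq_add_neg, Function.comp_def] using
        tendsto_atBot_add_const_left atTop μ₂ (tendsto_neg_atTop_atBot.comp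
          ((tendsto_atTop_add_const_right atTop (-T) tendsto_id).const_mul_atTop hμ₁))
    simpa using (tendsto_exp_atBot.comp hlin).const_mul (z T)
  filter_upwards [eventually_ge_atTop T, hdecay.eventually (eventually_le_nhds one_pos)]
    with t hTt hsmall
  have hsub : Icc T t ⊆ Ici 0 := fun s hs => hT.trans hs.1
  have hbound := le_mul_exp_add_of_linear_ode hTt (hΛ.mono hsub) (hμ.mono hsub)
    (fun s hs => hz s (hsub hs)) (hz0 T hT) (fun s hs => hL s (hsub hs)) hL0 hμ₁
    (fun s hs => hint s t hs.1 hs.2)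
  linarith

theorem eventually_ge_of_linear_ode {c ω μS : ℝ} (hΛ : ContinuousOn Λ (Ici 0))
    (hμ : ContinuousOn μ (Ici 0)) (hz : ∀ t ≥ (0:ℝ), HasDerivAt z (Λ t - μ t * z t) t)
    (hz0 : ∀ t ≥ (0:ℝ), 0 ≤ z t) (hΛ0 : ∀ t ≥ (0:ℝ), 0 ≤ Λ t)
    (hμS : ∀ t ≥ (0:ℝ), μ t ≤ μS) (hμS0 : 0 ≤ μS) (hω : 0 < ω)
    (hc : ∀ᶠ t in atTop, c ≤ (1/ω) * ∫ s in t..(t+ω), Λ s) :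
    ∀ᶠ t in atTop, c * ω * exp (-(μS * ω)) ≤ z t := by
  filter_upwards [eventually_ge_atTop ω,
    (tendsto_atTop_add_const_right atTop (-ω) tendsto_id).eventually hc] with t hωt hct
  simp only [id, ← sub_eq_add_neg, sub_add_cancel, one_div] at hct
  have hsub : Icc (t - ω) t ⊆ Ici 0 := fun s hs => (sub_nonneg.2 hωt).trans hs.1
  have hwindow := exp_mul_integral_le_of_linear_ode (sub_le_self t hω.le) (hΛ.mono hsub)
    (hμ.mono hsub) (fun s hs => hz s (hsub hs)) (hz0 _ (sub_nonneg.2 hωt))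
    (fun s hs => hΛ0 s (hsub hs)) (fun s hs => hμS s (hsub hs)) hμS0
  rw [sub_sub_cancel] at hwindow
  calc c * ω * exp (-(μS * ω)) ≤ exp (-(μS * ω)) * ∫ s in (t - ω)..t, Λ s := by
        rw [mul_comm]; gcongr; exact (mul_comm c ω).trans_le ((le_inv_mul_iff₀ hω).1 hct)
    _ ≤ z t := hwindow

end HalfLine

theorem stmt5_general
    (Λ μ : ℝ → ℝ)
    (hΛcont : ContinuousOn Λ (Set.Ici 0)) (hμcont : ContinuousOn μ (Set.Ici 0))
    (hΛnonneg : ∀ t ≥ (0:ℝ), 0 ≤ Λ t) (hμnonneg : ∀ t ≥ (0:ℝ), 0 ≤ μ t)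
    (hΛbdd : BddAbove (Λ '' Set.Ici 0))
    (μS : ℝ) (hμS : ∀ t ≥ (0:ℝ), μ t ≤ μS)
    (ωΛ : ℝ) (hωΛ : 0 < ωΛ)
    (hΛliminf : 0 < Filter.liminf (fun t : ℝ => (1/ωΛ) * ∫ s in t..(t+ωΛ), Λ s) Filter.atTop)
    (μ₁ μ₂ T : ℝ) (hμ₁ : 0 < μ₁) (hT : 0 ≤ T)
    (hint : ∀ t₀ t : ℝ, T ≤ t₀ → t₀ ≤ t → μ₁ * (t - t₀) - μ₂ ≤ ∫ s in t₀..t, μ s) :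
    ∃ m₁ > (0:ℝ), ∃ m₂ > (0:ℝ), ∀ z : ℝ → ℝ,
      (∀ t ≥ (0:ℝ), HasDerivAt z (Λ t - μ t * z t) t) → 0 < z 0 →
      m₁ ≤ Filter.liminf z Filter.atTop ∧
      Filter.liminf z Filter.atTop ≤ Filter.limsup z Filter.atTop ∧
      Filter.limsup z Filter.atTop ≤ m₂ := by
  obtain ⟨L, hL⟩ := hΛbdd
  have hΛL : ∀ t ≥ (0:ℝ), Λ t ≤ L := fun t ht => hL ⟨t, ht, rfl⟩
  have hL0 : 0 ≤ L := (hΛnonneg 0 le_rfl).trans (hΛL 0 le_rfl)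
  have hμS0 : 0 ≤ μS := (hμnonneg 0 le_rfl).trans (hμS 0 le_rfl)
  set c := liminf (fun t : ℝ => (1/ωΛ) * ∫ s in t..(t+ωΛ), Λ s) atTop / 2
  have hc : ∀ᶠ t in atTop, c ≤ (1/ωΛ) * ∫ s in t..(t+ωΛ), Λ s :=
    (Real.eventually_lt_of_lt_liminf (half_pos hΛliminf).le (half_lt_self hΛliminf)).mono
      fun _ => le_of_lt
  refine ⟨c * ωΛ * exp (-(μS * ωΛ)), mul_pos (mul_pos (half_pos hΛliminf) hωΛ) (exp_pos _),
    L * exp μ₂ / μ₁ + 1, by positivity, fun z hz hz0 => ?_⟩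
  have hznonneg : ∀ t ≥ (0:ℝ), 0 ≤ z t := fun t ht =>
    nonneg_of_linear_ode ht (hΛcont.mono Icc_subset_Ici_self)
      (hμcont.mono Icc_subset_Ici_self) (fun s hs => hz s hs.1) hz0.le (fun s hs => hΛnonneg s hs.1)
  exact le_liminf_and_limsup_le_of_eventually
    (eventually_ge_of_linear_ode hΛcont hμcont hz hznonneg hΛnonneg hμS hμS0 hωΛ hc)
    (eventually_le_of_linear_ode hΛcont hμcont hz hznonneg hΛL hL0 hμ₁ hT hint)

theorem stmt5
    (Λ μ : ℝ → ℝ)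
    (hΛcont : ContinuousOn Λ (Set.Ici 0)) (hμcont : ContinuousOn μ (Set.Ici 0))
    (hΛnonneg : ∀ t ≥ (0:ℝ), 0 ≤ Λ t) (hμnonneg : ∀ t ≥ (0:ℝ), 0 ≤ μ t)
    (hΛbdd : BddAbove (Λ '' Set.Ici 0))
    (μS : ℝ) (hμS : ∀ t ≥ (0:ℝ), μ t ≤ μS)
    (ωΛ : ℝ) (hωΛ : 0 < ωΛ)
    (hΛliminf : 0 < Filter.liminf (fun t : ℝ => (1/ωΛ) * ∫ s in t..(t+ωΛ), Λ s) Filter.atTop)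
    (μ₁ μ₂ T : ℝ) (hμ₁ : 0 < μ₁) (hμ₂ : 0 < μ₂) (hT : 0 ≤ T)
    (hint : ∀ t₀ t : ℝ, T ≤ t₀ → t₀ ≤ t → μ₁ * (t - t₀) - μ₂ ≤ ∫ s in t₀..t, μ s) :
    ∃ m₁ > (0:ℝ), ∃ m₂ > (0:ℝ), ∀ z : ℝ → ℝ,
      (∀ t ≥ (0:ℝ), HasDerivAt z (Λ t - μ t * z t) t) → 0 < z 0 →
      m₁ ≤ Filter.liminf z Filter.atTop ∧
      Filter.liminf z Filter.atTop ≤ Filter.limsup z Filter.atTop ∧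
      Filter.limsup z Filter.atTop ≤ m₂ :=
  stmt5_general Λ μ hΛcont hμcont hΛnonneg hμnonneg hΛbdd μS hμS ωΛ hωΛ hΛliminf μ₁ μ₂ T hμ₁ hT hint
end

section
/- Let ε, μ, γ: [0,∞) → ℝ be continuous, bounded, nonnegative, with ε_S = sup ε. Suppose I: [0,∞) → ℝ is positive, differentiable, and satisfies I'(t) ≤ (ε(t)/p − μ(t) − γ(t)) I(t) for all t ≥ T₁, where p > 0. Suppose there exist λ > 0, η₂ > 0 and T₃ ≥ T₁ such that ∫_t^{t+λ} (ε(s)/p − μ(s) − γ(s)) ds < −η₂ for all t ≥ T₃. Then for all t ≥ T₃, I(t) ≤ I(T₃) e^{−η₂ ⌊(t−T₃)/λ⌋ + λ ε_S / p}, and consequently I(t) → 0 as t → ∞. -/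
/-!
By Grönwall in logarithmic form, `log I` grows at most like `∫ (ε/p - μ - γ)`. Splitting
`[T₃, t]` into `⌊(t - T₃)/λ⌋` full windows of length `λ`, each contributing less than `-η₂`,
and a remainder of length less than `λ`, on which the integrand is at most `ε_S / p`, gives
the exponential bound.
-/

open intervalIntegral MeasureTheory Set Filter Topology

theorem le_mul_exp_integral_of_deriv_le_mul {u u' f : ℝ → ℝ} {a b : ℝ} (hab : a ≤ b)
    (hcont : ContinuousOn u (Icc a b)) (hderiv : ∀ x ∈ Ioo a b, HasDerivAt u (u' x) x)
    (hpos : ∀ x ∈ Icc a b, 0 < u x) (hf : IntegrableOn f (Icc a b))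
    (hle : ∀ x ∈ Ioo a b, u' x ≤ f x * u x) :
    u b ≤ u a * Real.exp (∫ x in a..b, f x) := by
  have hlog : Real.log (u b) - Real.log (u a) ≤ ∫ x in a..b, f x := by
    refine sub_le_integral_of_hasDeriv_right_of_le (g' := fun x ↦ u' x / u x) hab
      (hcont.log fun x hx ↦ (hpos x hx).ne') (fun x hx ↦ ?_) hf fun x hx ↦ ?_
    · exact ((hderiv x hx).log (hpos x (Ioo_subset_Icc_self hx)).ne').hasDerivWithinAt
    · exact (div_le_iff₀ (hpos x (Ioo_subset_Icc_self hx))).2 (hle x hx)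
  calc u b = Real.exp (Real.log (u b)) := (Real.exp_log (hpos b ⟨hab, le_rfl⟩)).symm
    _ ≤ Real.exp (Real.log (u a) + ∫ x in a..b, f x) := Real.exp_le_exp.2 (by linarith)
    _ = u a * Real.exp (∫ x in a..b, f x) := by
      rw [Real.exp_add, Real.exp_log (hpos a ⟨le_rfl, hab⟩)]

section Windows

variable {f : ℝ → ℝ} {a lam η : ℝ}

theorem MeasureTheory.LocallyIntegrableOn.intervalIntegrable_of_Ici
    (hf : LocallyIntegrableOn f (Ici a)) {x y : ℝ} (hx : a ≤ x) (hy : a ≤ y) :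
    IntervalIntegrable f volume x y :=
  (hf.integrableOn_compact_subset (fun _ hz ↦ le_trans (le_min hx hy) hz.1)
    isCompact_uIcc).intervalIntegrable

theorem integral_le_neg_mul_of_forall_window_le (hf : LocallyIntegrableOn f (Ici a))
    (hlam : 0 ≤ lam) (hwin : ∀ t ≥ a, ∫ s in t..t + lam, f s ≤ -η) (n : ℕ) :
    ∫ s in a..a + n * lam, f s ≤ -(n * η) := by
  induction n with
  | zero => simp
  | succ n ih =>
    have hn : a ≤ a + n * lam := le_add_of_nonneg_right (by positivity)
    rw [Nat.cast_succ, add_one_mul, ← add_assoc, ← integral_add_adjacent_intervals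
      (hf.intervalIntegrable_of_Ici le_rfl hn) (hf.intervalIntegrable_of_Ici hn (by linarith))]
    linarith [hwin _ hn]

theorem integral_le_neg_mul_floor_of_forall_window_le (hf : LocallyIntegrableOn f (Ici a))
    (hlam : 0 < lam) (hwin : ∀ t ≥ a, ∫ s in t..t + lam, f s ≤ -η) {M : ℝ} (hM : 0 ≤ M)
    (hfM : ∀ s ≥ a, f s ≤ M) {t : ℝ} (ht : a ≤ t) :
    ∫ s in a..t, f s ≤ -η * ⌊(t - a) / lam⌋ + lam * M := by
  set n := ⌊(t - a) / lam⌋₊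
  have hq : 0 ≤ (t - a) / lam := div_nonneg (by linarith) hlam.le
  have hn_le : a + n * lam ≤ t := by
    linarith [(le_div_iff₀ hlam).1 (Nat.floor_le hq)]
  have hn_gt : t - lam < a + n * lam := by
    linarith [(div_lt_iff₀ hlam).1 (Nat.lt_floor_add_one ((t - a) / lam))]
  have ha_le : a ≤ a + n * lam := le_add_of_nonneg_right (by positivity)
  have hrem : ∫ s in a + n * lam..t, f s ≤ lam * M := calc
    ∫ s in a + n * lam..t, f s ≤ ∫ _ in a + n * lam..t, M :=
      integral_mono_on hn_le (hf.intervalIntegrable_of_Ici ha_le (ha_le.trans hn_le))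
        intervalIntegrable_const fun s hs ↦ hfM s (ha_le.trans hs.1)
    _ = (t - (a + n * lam)) * M := by rw [intervalIntegral.integral_const, smul_eq_mul]
    _ ≤ lam * M := mul_le_mul_of_nonneg_right (by linarith) hM
  rw [← natCast_floor_eq_intCast_floor hq, ← integral_add_adjacent_intervals
    (hf.intervalIntegrable_of_Ici le_rfl ha_le) (hf.intervalIntegrable_of_Ici ha_le
      (ha_le.trans hn_le))]
  linarith [integral_le_neg_mul_of_forall_window_le hf hlam.le hwin n]

end Windows

theorem tendsto_mul_exp_neg_mul_floor_atTop (C a D : ℝ) {lam η : ℝ} (hlam : 0 < lam)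
    (hη : 0 < η) :
    Tendsto (fun t ↦ C * Real.exp (-η * ⌊(t - a) / lam⌋ + D)) atTop (𝓝 0) := by
  have hfloor : Tendsto (fun t : ℝ ↦ (⌊(t - a) / lam⌋ : ℝ)) atTop atTop :=
    tendsto_intCast_atTop_atTop.comp <| tendsto_floor_atTop.comp <|
      (tendsto_atTop_add_const_right _ _ tendsto_id).atTop_div_const hlam
  have hexp := Real.tendsto_exp_atBot.comp <| tendsto_atBot_add_const_right _ D <|
    hfloor.const_mul_atTop_of_neg (neg_neg_of_pos hη)
  simpa using hexp.const_mul C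

theorem stmt8_general
    (ε μ γ : ℝ → ℝ)
    (hεcont : ContinuousOn ε (Set.Ici 0)) (hμcont : ContinuousOn μ (Set.Ici 0))
    (hγcont : ContinuousOn γ (Set.Ici 0))
    (hεnonneg : ∀ t ≥ (0:ℝ), 0 ≤ ε t) (hμnonneg : ∀ t ≥ (0:ℝ), 0 ≤ μ t)
    (hγnonneg : ∀ t ≥ (0:ℝ), 0 ≤ γ t)
    (hεbdd : BddAbove (ε '' Set.Ici 0))
    (εS : ℝ) (hεS : εS = sSup (ε '' Set.Ici 0))
    (I : ℝ → ℝ) (hIpos : ∀ t ≥ (0:ℝ), 0 < I t) (hIdiff : Differentiable ℝ I)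
    (p T₁ : ℝ) (hp : 0 < p) (hT₁ : 0 ≤ T₁)
    (hineq : ∀ t ≥ T₁, deriv I t ≤ (ε t / p - μ t - γ t) * I t)
    (lam η₂ T₃ : ℝ) (hlam : 0 < lam) (hη₂ : 0 < η₂) (hT₃ : T₁ ≤ T₃)
    (hwin : ∀ t ≥ T₃, (∫ s in t..(t+lam), (ε s / p - μ s - γ s)) < -η₂) :
    (∀ t ≥ T₃, I t ≤ I T₃ * Real.exp (-η₂ * (⌊(t - T₃)/lam⌋ : ℝ) + lam * εS / p)) ∧
    Filter.Tendsto I Filter.atTop (nhds 0) := by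
  set f := fun s ↦ ε s / p - μ s - γ s
  have hT₃0 : 0 ≤ T₃ := hT₁.trans hT₃
  have hf : LocallyIntegrableOn f (Ici T₃) :=
    ((((hεcont.div_const p).sub hμcont).sub hγcont).mono
      (Ici_subset_Ici.2 hT₃0)).locallyIntegrableOn measurableSet_Ici
  have hεS_ge : ∀ s ≥ (0:ℝ), ε s ≤ εS := fun s hs ↦
    hεS ▸ le_csSup hεbdd (mem_image_of_mem ε hs)
  have hfM : ∀ s ≥ T₃, f s ≤ εS / p := fun s hs ↦ by
    have := div_le_div_of_nonneg_right (hεS_ge s (hT₃0.trans hs)) hp.le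
    linarith [hμnonneg s (hT₃0.trans hs), hγnonneg s (hT₃0.trans hs)]
  have hbound :
      ∀ t ≥ T₃, I t ≤ I T₃ * Real.exp (-η₂ * (⌊(t - T₃)/lam⌋ : ℝ) + lam * εS / p) := by
    intro t ht
    refine (le_mul_exp_integral_of_deriv_le_mul ht hIdiff.continuous.continuousOn
      (fun x _ ↦ (hIdiff x).hasDerivAt) (fun x hx ↦ hIpos x (hT₃0.trans hx.1))
      (hf.integrableOn_compact_subset (fun x hx ↦ hx.1) isCompact_Icc)
      fun x hx ↦ hineq x (hT₃.trans hx.1.le)).trans ?_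
    gcongr
    · exact (hIpos T₃ hT₃0).le
    rw [mul_div_assoc]
    exact integral_le_neg_mul_floor_of_forall_window_le hf hlam (fun s hs ↦ (hwin s hs).le)
      (div_nonneg ((hεnonneg 0 le_rfl).trans (hεS_ge 0 le_rfl)) hp.le) hfM ht
  refine ⟨hbound, tendsto_of_tendsto_of_tendsto_of_le_of_le' tendsto_const_nhds
    (tendsto_mul_exp_neg_mul_floor_atTop (I T₃) T₃ (lam * εS / p) hlam hη₂) ?_ ?_⟩
  · filter_upwards [eventually_ge_atTop 0] with t ht using (hIpos t ht).le
  · filter_upwards [eventually_ge_atTop T₃] with t ht using hbound t ht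

theorem stmt8
    (ε μ γ : ℝ → ℝ)
    (hεcont : ContinuousOn ε (Set.Ici 0)) (hμcont : ContinuousOn μ (Set.Ici 0))
    (hγcont : ContinuousOn γ (Set.Ici 0))
    (hεnonneg : ∀ t ≥ (0:ℝ), 0 ≤ ε t) (hμnonneg : ∀ t ≥ (0:ℝ), 0 ≤ μ t)
    (hγnonneg : ∀ t ≥ (0:ℝ), 0 ≤ γ t)
    (hμbdd : BddAbove (μ '' Set.Ici 0)) (hγbdd : BddAbove (γ '' Set.Ici 0))
    (hεbdd : BddAbove (ε '' Set.Ici 0))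
    (εS : ℝ) (hεS : εS = sSup (ε '' Set.Ici 0))
    (I : ℝ → ℝ) (hIpos : ∀ t ≥ (0:ℝ), 0 < I t) (hIdiff : Differentiable ℝ I)
    (p T₁ : ℝ) (hp : 0 < p) (hT₁ : 0 ≤ T₁)
    (hineq : ∀ t ≥ T₁, deriv I t ≤ (ε t / p - μ t - γ t) * I t)
    (lam η₂ T₃ : ℝ) (hlam : 0 < lam) (hη₂ : 0 < η₂) (hT₃ : T₁ ≤ T₃)
    (hwin : ∀ t ≥ T₃, (∫ s in t..(t+lam), (ε s / p - μ s - γ s)) < -η₂) :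
    (∀ t ≥ T₃, I t ≤ I T₃ * Real.exp (-η₂ * (⌊(t - T₃)/lam⌋ : ℝ) + lam * εS / p)) ∧
    Filter.Tendsto I Filter.atTop (nhds 0) :=
  stmt8_general ε μ γ hεcont hμcont hγcont hεnonneg hμnonneg hγnonneg hεbdd εS hεS I hIpos hIdiff p
    T₁ hp hT₁ hineq lam η₂ T₃ hlam hη₂ hT₃ hwin
end

section
/- Let E: [0,∞) → ℝ be positive and differentiable with E'(t) ≤ c(t) E(t) for all t ≥ T₂, where c: [0,∞) → ℝ is continuous and bounded above by C_S > 0. Suppose there exist λ > 0 and η > 0 such that ∫_t^{t+λ} c(s) ds < −η for all t ≥ T₂. Then E(t) ≤ E(T₂) exp(−η ⌊(t−T₂)/λ⌋ + C_S λ) for all t ≥ T₂, and hence E(t) → 0 as t → ∞. -/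
/-!
Along t ↦ exp (-∫_{T₂}^t c) · E t the differential inequality makes the derivative nonpositive, so
E t ≤ E T₂ · exp (∫_{T₂}^t c) (Gronwall). Cutting [T₂, t] into ⌊(t - T₂)/λ⌋ windows of length λ,
each contributing less than -η, plus a remainder of length at most λ on which c ≤ C_S, bounds the
exponent by -η ⌊(t - T₂)/λ⌋ + C_S λ, which tends to -∞.
-/

open intervalIntegral Set Filter

theorem ContinuousOn.intervalIntegrable_of_Ici {c : ℝ → ℝ} {a x y : ℝ}
    (hc : ContinuousOn c (Ici a)) (hx : a ≤ x) (hy : a ≤ y) :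
    IntervalIntegrable c MeasureTheory.volume x y :=
  (hc.mono fun _ hs => le_trans (le_inf hx hy) hs.1).intervalIntegrable

theorem le_mul_exp_integral_of_hasDerivAt_le {c E E' : ℝ → ℝ} {a b : ℝ} (hab : a ≤ b)
    (hc : ContinuousOn c (Icc a b)) (hE : ContinuousOn E (Icc a b))
    (hE' : ∀ x ∈ Ioo a b, HasDerivAt E (E' x) x) (hle : ∀ x ∈ Ioo a b, E' x ≤ c x * E x) :
    E b ≤ E a * Real.exp (∫ s in a..b, c s) := by
  set I : ℝ → ℝ := fun x => ∫ s in a..x, c s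
  have hI : ContinuousOn I (Icc a b) := by
    rw [← uIcc_of_le hab]
    exact continuousOn_primitive_interval (by rw [uIcc_of_le hab]; exact hc.integrableOn_Icc)
  have hI' : ∀ x ∈ Ioo a b, HasDerivAt I (c x) x := fun x hx =>
    integral_hasDerivAt_right
      ((hc.mono (uIcc_subset_Icc (left_mem_Icc.2 hab) (Ioo_subset_Icc_self hx))).intervalIntegrable)
      ((hc.mono Ioo_subset_Icc_self).stronglyMeasurableAtFilter isOpen_Ioo x hx)
      (hc.continuousAt (Icc_mem_nhds hx.1 hx.2))
  have hanti : AntitoneOn (fun x => Real.exp (-I x) * E x) (Icc a b) := by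
    refine antitoneOn_of_hasDerivWithinAt_nonpos (convex_Icc a b)
      ((hI.neg.rexp).mul hE) (fun x hx => ?_) (fun x hx => ?_)
      (f' := fun x => Real.exp (-I x) * (E' x - c x * E x))
    · rw [interior_Icc] at hx
      exact ((((hI' x hx).fun_neg.exp).fun_mul (hE' x hx)).congr_deriv (by ring)).hasDerivWithinAt
    · rw [interior_Icc] at hx
      exact mul_nonpos_of_nonneg_of_nonpos (Real.exp_pos _).le (sub_nonpos.2 (hle x hx))
  have hends := hanti (left_mem_Icc.2 hab) (right_mem_Icc.2 hab) hab
  simp only [I, integral_same, neg_zero, Real.exp_zero, one_mul] at hends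
  calc E b = Real.exp (I b) * (Real.exp (-I b) * E b) := by
        rw [← mul_assoc, ← Real.exp_add, add_neg_cancel, Real.exp_zero, one_mul]
    _ ≤ Real.exp (I b) * E a := by gcongr
    _ = E a * Real.exp (∫ s in a..b, c s) := mul_comm _ _

theorem integral_le_neg_mul_of_window_le {c : ℝ → ℝ} {a lam η : ℝ}
    (hc : ContinuousOn c (Ici a)) (hlam : 0 ≤ lam)
    (hwin : ∀ t ≥ a, ∫ s in t..t + lam, c s ≤ -η) (k : ℕ) :
    ∫ s in a..a + k * lam, c s ≤ -η * k := by
  induction k with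
  | zero => simp
  | succ k ih =>
    have hk : a ≤ a + k * lam := le_add_of_nonneg_right (by positivity)
    have hk' : a ≤ a + k * lam + lam := by linarith
    push_cast
    rw [show a + (k + 1) * lam = a + k * lam + lam by ring,
      ← integral_add_adjacent_intervals (hc.intervalIntegrable_of_Ici le_rfl hk)
        (hc.intervalIntegrable_of_Ici hk hk')]
    linarith [hwin (a + k * lam) hk]

theorem integral_le_neg_mul_floor_add {c : ℝ → ℝ} {a lam η CS t : ℝ}
    (hc : ContinuousOn c (Ici a)) (hCS : 0 ≤ CS) (hcle : ∀ s ≥ a, c s ≤ CS) (hlam : 0 < lam)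
    (hwin : ∀ s ≥ a, ∫ u in s..s + lam, c u ≤ -η) (ht : a ≤ t) :
    ∫ s in a..t, c s ≤ -η * (⌊(t - a) / lam⌋ : ℝ) + CS * lam := by
  have hq : 0 ≤ (t - a) / lam := div_nonneg (sub_nonneg.2 ht) hlam.le
  set N := ⌊(t - a) / lam⌋₊
  rw [← natCast_floor_eq_intCast_floor hq]
  have hN : N * lam ≤ t - a := (le_div_iff₀ hlam).1 (Nat.floor_le hq)
  have hrem : t - a < (N + 1) * lam := (div_lt_iff₀ hlam).1 (Nat.lt_floor_add_one _)
  have hmid : a ≤ a + N * lam := le_add_of_nonneg_right (by positivity)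
  have htail : ∫ s in (a + N * lam)..t, c s ≤ CS * (t - (a + N * lam)) := by
    calc ∫ s in (a + N * lam)..t, c s ≤ ∫ _ in (a + N * lam)..t, CS :=
          integral_mono_on (by linarith) (hc.intervalIntegrable_of_Ici hmid (by linarith))
            intervalIntegrable_const fun s hs => hcle s (hmid.trans hs.1)
      _ = CS * (t - (a + N * lam)) := by rw [integral_const, smul_eq_mul, mul_comm]
  rw [← integral_add_adjacent_intervals (hc.intervalIntegrable_of_Ici le_rfl hmid)
    (hc.intervalIntegrable_of_Ici hmid ht)]
  have hremainder : CS * (t - (a + N * lam)) ≤ CS * lam :=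
    mul_le_mul_of_nonneg_left (by linarith) hCS
  linarith [integral_le_neg_mul_of_window_le hc hlam.le hwin N]

theorem stmt9
    (c : ℝ → ℝ) (hccont : ContinuousOn c (Set.Ici 0))
    (CS : ℝ) (hCS : 0 < CS) (hcbdd : ∀ t ≥ (0:ℝ), c t ≤ CS)
    (E : ℝ → ℝ) (T₂ : ℝ) (hT₂ : 0 ≤ T₂)
    (hEpos : ∀ t ≥ (0:ℝ), 0 < E t) (hEdiff : Differentiable ℝ E)
    (hineq : ∀ t ≥ T₂, deriv E t ≤ c t * E t)
    (lam η : ℝ) (hlam : 0 < lam) (hη : 0 < η)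
    (hwin : ∀ t ≥ T₂, (∫ s in t..(t+lam), c s) < -η) :
    (∀ t ≥ T₂, E t ≤ E T₂ * Real.exp (-η * (⌊(t - T₂)/lam⌋ : ℝ) + CS * lam)) ∧
    Filter.Tendsto E Filter.atTop (nhds 0) := by
  have hc : ContinuousOn c (Ici T₂) := hccont.mono (Ici_subset_Ici.2 hT₂)
  have hbound : ∀ t ≥ T₂, E t ≤ E T₂ * Real.exp (-η * (⌊(t - T₂)/lam⌋ : ℝ) + CS * lam) := by
    intro t ht
    calc E t ≤ E T₂ * Real.exp (∫ s in T₂..t, c s) :=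
          le_mul_exp_integral_of_hasDerivAt_le ht (hc.mono Icc_subset_Ici_self)
            hEdiff.continuous.continuousOn (fun x _ => (hEdiff x).hasDerivAt)
            (fun x hx => hineq x hx.1.le)
      _ ≤ _ := by
          gcongr
          · exact (hEpos T₂ hT₂).le
          · exact integral_le_neg_mul_floor_add hc hCS.le (fun s hs => hcbdd s (hT₂.trans hs))
              hlam (fun s hs => (hwin s hs).le) ht
  have hfloor : Tendsto (fun t => (⌊(t - T₂) / lam⌋ : ℝ)) atTop atTop :=
    tendsto_intCast_atTop_atTop.comp <| tendsto_floor_atTop.comp <|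
      (tendsto_atTop_add_const_right _ _ tendsto_id).atTop_div_const hlam
  have hlim : Tendsto (fun t => E T₂ * Real.exp (-η * (⌊(t - T₂)/lam⌋ : ℝ) + CS * lam))
      atTop (nhds 0) := by
    simpa using ((Real.tendsto_exp_atBot.comp <| tendsto_atBot_add_const_right _ _ <|
      hfloor.const_mul_atTop_of_neg (neg_lt_zero.2 hη)).const_mul (E T₂))
  refine ⟨hbound, squeeze_zero' ?_ ?_ hlim⟩
  · filter_upwards [eventually_ge_atTop 0] with t ht using (hEpos t ht).le
  · filter_upwards [eventually_ge_atTop T₂] with t ht using hbound t ht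
end
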